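/- Fix an integer n ≥ 4, nodes a = x₀ < x₁ < ⋯ < x_n = b, data values f₀, …, f_n ∈ ℝ, and a point x ∈ (x₀, x_n) with x ≠ x_j for every j. For c > 0 let L_c^{MQ} and L_c^{RTH} denote the quasi-interpolants built with the same formulas using, respectively, the MQ basis φ_j(x) = √(c² + (x − x_j)²) and the RTH basis φ_j(x) = (x − x_j)·tanh((x − x_j)/c), and let κ_c^{MQ}(x), κ_c^{RTH}(x) be the curvatures of the corresponding curves at x. Then |κ_c^{MQ}(x) − κ_c^{RTH}(x)| → 0 as c → 0⁺. -/

import Mathlib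

/-- `ψ_j` built from a general basis family `φ`. -/
noncomputable def quasiPsi (phi : ℕ → ℝ → ℝ) (X : ℕ → ℝ) (j : ℕ) (t : ℝ) : ℝ :=
  (phi (j + 1) t - phi j t) / (2 * (X (j + 1) - X j)) -
    (phi j t - phi (j - 1) t) / (2 * (X j - X (j - 1)))

/-- The quasi-interpolant
`(L f)(t) = f₀α₀(t) + f₁α₁(t) + Σ_{j=2}^{n−2} f_jψ_j(t) + f_{n−1}α_{n−1}(t) + f_nα_n(t)`
built from a general basis family `φ_j` (`j = 1, …, n−1`). -/
noncomputable def quasiInterp (phi : ℕ → ℝ → ℝ) (n : ℕ) (X f : ℕ → ℝ) (t : ℝ) : ℝ :=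
  f 0 * (1 / 2 + (phi 1 t - (t - X 0)) / (2 * (X 1 - X 0))) +
    f 1 * ((phi 2 t - phi 1 t) / (2 * (X 2 - X 1)) -
      (phi 1 t - (t - X 0)) / (2 * (X 1 - X 0))) +
    (∑ j ∈ Finset.Icc 2 (n - 2), f j * quasiPsi phi X j t) +
    f (n - 1) * (((X n - t) - phi (n - 1) t) / (2 * (X n - X (n - 1))) -
      (phi (n - 1) t - phi (n - 2) t) / (2 * (X (n - 1) - X (n - 2)))) +
    f n * (1 / 2 + (phi (n - 1) t - (X n - t)) / (2 * (X n - X (n - 1))))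

/-- The MQ basis: `φ_j(t) = √(c² + (t − x_j)²)`. -/
noncomputable def mqBasis (c : ℝ) (X : ℕ → ℝ) (j : ℕ) (t : ℝ) : ℝ :=
  Real.sqrt (c ^ 2 + (t - X j) ^ 2)

/-- The RTH basis: `φ_j(t) = (t − x_j)·tanh((t − x_j)/c)`. -/
noncomputable def rthBasis (c : ℝ) (X : ℕ → ℝ) (j : ℕ) (t : ℝ) : ℝ :=
  (t - X j) * Real.tanh ((t - X j) / c)

/-- The curvature of the curve `y = F(x)` at `x`:
`κ(x) = |F″(x)| / (1 + (F′(x))²)^{3/2}`. -/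
noncomputable def curvature (F : ℝ → ℝ) (x : ℝ) : ℝ :=
  |deriv (deriv F) x| / (1 + (deriv F x) ^ 2) ^ ((3 : ℝ) / 2)


section Aux
open Real Filter


lemma aux_hasDerivAt_tanh (y : ℝ) : HasDerivAt Real.tanh (1 - Real.tanh y ^ 2) y := by
  have h := (Real.hasDerivAt_sinh y).div (Real.hasDerivAt_cosh y) (Real.cosh_pos y).ne'
  have hfun : Real.tanh = fun y => Real.sinh y / Real.cosh y :=
    funext fun y => Real.tanh_eq_sinh_div_cosh y
  rw [hfun]
  refine h.congr_deriv (Eq.symm ?_)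
  show 1 - (Real.sinh y / Real.cosh y) ^ 2 = _
  have hc := (Real.cosh_pos y).ne'
  field_simp

lemma aux_one_sub_tanh_sq (z : ℝ) : 1 - Real.tanh z ^ 2 = 1 / Real.cosh z ^ 2 := by
  rw [Real.tanh_eq_sinh_div_cosh]
  have hc := (Real.cosh_pos z).ne'
  field_simp
  exact Real.cosh_sq_sub_sinh_sq z

lemma aux_exp_le_cosh (z : ℝ) : Real.exp z / 2 ≤ Real.cosh z := by
  rw [Real.cosh_eq]
  have := (Real.exp_pos (-z)).le
  linarith

lemma aux_tendsto_pow_div_cosh_sq (n : ℕ) :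
    Tendsto (fun z : ℝ => z ^ n / Real.cosh z ^ 2) atTop (nhds 0) := by
  have h1 : Tendsto (fun z : ℝ => (4 / 2 ^ n) * ((2 * z) ^ n * Real.exp (-(2 * z)))) atTop (nhds 0) := by
    have := (tendsto_pow_mul_exp_neg_atTop_nhds_zero n).comp
      (tendsto_id.const_mul_atTop (by norm_num : (0:ℝ) < 2))
    simpa [Function.comp] using this.const_mul ((4:ℝ) / 2 ^ n)
  refine tendsto_of_tendsto_of_tendsto_of_le_of_le' tendsto_const_nhds h1 ?_ ?_
  · filter_upwards [eventually_ge_atTop (0:ℝ)] with z hz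
    positivity
  · filter_upwards [eventually_ge_atTop (0:ℝ)] with z hz
    have hcosh : Real.exp z / 2 ≤ Real.cosh z := aux_exp_le_cosh z
    have hexp : (0:ℝ) < Real.exp z / 2 := by positivity
    have hsq : (Real.exp z / 2) ^ 2 ≤ Real.cosh z ^ 2 := by
      apply pow_le_pow_left₀ hexp.le hcosh
    have hz2 : (0:ℝ) ≤ z ^ n := by positivity
    calc z ^ n / Real.cosh z ^ 2 ≤ z ^ n / (Real.exp z / 2) ^ 2 :=
          div_le_div_of_nonneg_left hz2 (by positivity) hsq
      _ = (4 / 2 ^ n) * ((2 * z) ^ n * Real.exp (-(2 * z))) := by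
          rw [Real.exp_neg]
          have h2 : (2 * z) ^ n = 2 ^ n * z ^ n := mul_pow 2 z n
          have he : Real.exp (2 * z) = Real.exp z ^ 2 := by
            rw [← Real.exp_nat_mul]; norm_num [mul_comm]
          rw [h2, he]
          have h3 := (Real.exp_pos z).ne'
          have h4 : ((2:ℝ) ^ n) ≠ 0 := by positivity
          field_simp
          ring

lemma aux_tendsto_tanh_atTop : Tendsto Real.tanh atTop (nhds 1) := by
  have key : ∀ z : ℝ, Real.tanh z = (1 - Real.exp (-(2*z))) / (1 + Real.exp (-(2*z))) := by
    intro z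
    rw [Real.tanh_eq_sinh_div_cosh, Real.sinh_eq, Real.cosh_eq]
    have h1 : Real.exp (-(2*z)) = Real.exp (-z) ^ 2 := by
      rw [← Real.exp_nat_mul]; norm_num
    have h2 : Real.exp z * Real.exp (-z) = 1 := by
      rw [← Real.exp_add]; simp
    have hz := (Real.exp_pos z).ne'
    have hz2 : (0:ℝ) < 1 + Real.exp (-(2*z)) := by positivity
    rw [div_eq_div_iff (by positivity) (by positivity)]
    rw [h1]
    nlinarith [Real.exp_pos (-z)]
  rw [show Real.tanh = fun z : ℝ => (1 - Real.exp (-(2*z))) / (1 + Real.exp (-(2*z))) from funext key]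
  have hexp : Tendsto (fun z : ℝ => Real.exp (-(2*z))) atTop (nhds 0) := by
    have := Real.tendsto_exp_neg_atTop_nhds_zero.comp
      (tendsto_id.const_mul_atTop (by norm_num : (0:ℝ) < 2))
    simpa [Function.comp_def] using this
  have := ((tendsto_const_nhds (x := (1:ℝ))).sub hexp).div (tendsto_const_nhds.add hexp) (by norm_num : (1:ℝ) + 0 ≠ 0)
  rw [sub_zero, add_zero, div_one] at this
  exact this

lemma aux_tendsto_tanh_atBot : Tendsto Real.tanh atBot (nhds (-1)) := by
  have := (aux_tendsto_tanh_atTop.comp tendsto_neg_atBot_atTop).neg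
  simp only [Function.comp_def] at this
  norm_num at this
  exact this

lemma aux_tendsto_sq_div_cosh_atBot (n : ℕ) (hn : Even n) :
    Tendsto (fun z : ℝ => z ^ n / Real.cosh z ^ 2) atBot (nhds 0) := by
  have := (aux_tendsto_pow_div_cosh_sq n).comp tendsto_neg_atBot_atTop
  simp only [Function.comp_def] at this
  refine this.congr fun z => ?_
  simp only [Real.cosh_neg, hn.neg_pow]




noncomputable def mqD (c : ℝ) (X : ℕ → ℝ) (j : ℕ) (t : ℝ) : ℝ :=
  (t - X j) / Real.sqrt (c ^ 2 + (t - X j) ^ 2)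
noncomputable def mqD2 (c : ℝ) (X : ℕ → ℝ) (j : ℕ) (t : ℝ) : ℝ :=
  c ^ 2 / ((c ^ 2 + (t - X j) ^ 2) * Real.sqrt (c ^ 2 + (t - X j) ^ 2))
noncomputable def rthD (c : ℝ) (X : ℕ → ℝ) (j : ℕ) (t : ℝ) : ℝ :=
  Real.tanh ((t - X j) / c) + (t - X j) / c * (1 - Real.tanh ((t - X j) / c) ^ 2)
noncomputable def rthD2 (c : ℝ) (X : ℕ → ℝ) (j : ℕ) (t : ℝ) : ℝ :=
  2 / c * (1 - Real.tanh ((t - X j) / c) ^ 2) -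
    2 * ((t - X j) / c ^ 2) * Real.tanh ((t - X j) / c) * (1 - Real.tanh ((t - X j) / c) ^ 2)

lemma sq_add_pos {c u : ℝ} (hc : c ≠ 0) : 0 < c ^ 2 + u ^ 2 := by positivity

lemma inner_hasDerivAt (c X j t : ℝ) (_ : True) :
    HasDerivAt (fun t : ℝ => c ^ 2 + (t - X) ^ 2) (2 * (t - X)) t := by
  have := (((hasDerivAt_id t).sub_const X).pow 2).const_add (c ^ 2)
  simpa using this

lemma mq_hasDerivAt {c : ℝ} (hc : c ≠ 0) (X : ℕ → ℝ) (j : ℕ) (t : ℝ) :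
    HasDerivAt (mqBasis c X j) (mqD c X j t) t := by
  have hpos : (0:ℝ) < c ^ 2 + (t - X j) ^ 2 := sq_add_pos hc
  have hg := inner_hasDerivAt c (X j) j t trivial
  have h := (Real.hasDerivAt_sqrt hpos.ne').comp t hg
  have hs : Real.sqrt (c ^ 2 + (t - X j) ^ 2) ≠ 0 := by positivity
  refine h.congr_deriv (Eq.symm ?_)
  unfold mqD
  field_simp

lemma mqD_hasDerivAt {c : ℝ} (hc : c ≠ 0) (X : ℕ → ℝ) (j : ℕ) (t : ℝ) :
    HasDerivAt (mqD c X j) (mqD2 c X j t) t := by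
  have hpos : (0:ℝ) < c ^ 2 + (t - X j) ^ 2 := sq_add_pos hc
  have hs : (0:ℝ) < Real.sqrt (c ^ 2 + (t - X j) ^ 2) := Real.sqrt_pos.mpr hpos
  have hnum : HasDerivAt (fun t : ℝ => t - X j) 1 t := by
    simpa using (hasDerivAt_id t).sub_const (X j)
  have h := hnum.div (mq_hasDerivAt hc X j t) hs.ne'
  refine h.congr_deriv (Eq.symm ?_)
  unfold mqD2 mqBasis mqD
  rw [eq_div_iff (by positivity)]
  have hsq : Real.sqrt (c ^ 2 + (t - X j) ^ 2) ^ 2 = c ^ 2 + (t - X j) ^ 2 :=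
    Real.sq_sqrt hpos.le
  field_simp
  nlinarith [hsq, hs, hpos]

lemma rth_hasDerivAt {c : ℝ} (hc : c ≠ 0) (X : ℕ → ℝ) (j : ℕ) (t : ℝ) :
    HasDerivAt (rthBasis c X j) (rthD c X j t) t := by
  have hw : HasDerivAt (fun t : ℝ => (t - X j) / c) (1 / c) t := by
    simpa using ((hasDerivAt_id t).sub_const (X j)).div_const c
  have hth : HasDerivAt (fun t : ℝ => Real.tanh ((t - X j) / c))
      ((1 - Real.tanh ((t - X j) / c) ^ 2) * (1 / c)) t :=
    (aux_hasDerivAt_tanh _).comp t hw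
  have h := ((hasDerivAt_id t).sub_const (X j)).mul hth
  refine h.congr_deriv (Eq.symm ?_)
  unfold rthD
  simp only [id_eq]
  ring

lemma rthD_hasDerivAt {c : ℝ} (hc : c ≠ 0) (X : ℕ → ℝ) (j : ℕ) (t : ℝ) :
    HasDerivAt (rthD c X j) (rthD2 c X j t) t := by
  have hw : HasDerivAt (fun t : ℝ => (t - X j) / c) (1 / c) t := by
    simpa using ((hasDerivAt_id t).sub_const (X j)).div_const c
  have hth : HasDerivAt (fun t : ℝ => Real.tanh ((t - X j) / c))
      ((1 - Real.tanh ((t - X j) / c) ^ 2) * (1 / c)) t :=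
    (aux_hasDerivAt_tanh _).comp t hw
  have hth2 := hth.pow 2
  have hone := (hasDerivAt_const t (1:ℝ)).sub hth2
  have h := hth.add (hw.mul hone)
  refine h.congr_deriv (Eq.symm ?_)
  unfold rthD2
  push_cast
  simp only [Pi.sub_apply, Pi.pow_apply]
  field_simp
  ring_nf

lemma aux_pow_div_cosh_atBot (n : ℕ) :
    Filter.Tendsto (fun z : ℝ => z ^ n / Real.cosh z ^ 2) Filter.atBot (nhds 0) := by
  have h := (aux_tendsto_pow_div_cosh_sq n).comp tendsto_neg_atBot_atTop
  simp only [Function.comp_def] at h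
  have h2 := h.const_mul ((-1 : ℝ) ^ n)
  rw [mul_zero] at h2
  refine h2.congr fun z => ?_
  rw [Real.cosh_neg, ← mul_div_assoc, ← mul_pow]
  norm_num

lemma aux_K_atTop :
    Filter.Tendsto (fun z : ℝ => z * (1 - Real.tanh z ^ 2)) Filter.atTop (nhds 0) :=
  (aux_tendsto_pow_div_cosh_sq 1).congr fun z => by
    rw [aux_one_sub_tanh_sq]; ring

lemma aux_K_atBot :
    Filter.Tendsto (fun z : ℝ => z * (1 - Real.tanh z ^ 2)) Filter.atBot (nhds 0) :=
  (aux_pow_div_cosh_atBot 1).congr fun z => by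
    rw [aux_one_sub_tanh_sq]; ring

lemma aux_K2_atTop :
    Filter.Tendsto (fun z : ℝ => z ^ 2 * (1 - Real.tanh z ^ 2)) Filter.atTop (nhds 0) :=
  (aux_tendsto_pow_div_cosh_sq 2).congr fun z => by
    rw [aux_one_sub_tanh_sq]; ring

lemma aux_K2_atBot :
    Filter.Tendsto (fun z : ℝ => z ^ 2 * (1 - Real.tanh z ^ 2)) Filter.atBot (nhds 0) :=
  (aux_pow_div_cosh_atBot 2).congr fun z => by
    rw [aux_one_sub_tanh_sq]; ring

lemma aux_div_atTop {u : ℝ} (hu : 0 < u) :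
    Filter.Tendsto (fun c : ℝ => u / c) (nhdsWithin 0 (Set.Ioi 0)) Filter.atTop :=
  (tendsto_inv_nhdsGT_zero.const_mul_atTop hu).congr fun c => (div_eq_mul_inv u c).symm

lemma aux_div_atBot {u : ℝ} (hu : u < 0) :
    Filter.Tendsto (fun c : ℝ => u / c) (nhdsWithin 0 (Set.Ioi 0)) Filter.atBot := by
  have h := (aux_div_atTop (neg_pos.mpr hu))
  have := tendsto_neg_atTop_atBot.comp h
  simp only [Function.comp_def] at this
  refine this.congr fun c => ?_
  ring

lemma mqD_tendsto (X : ℕ → ℝ) (j : ℕ) (x : ℝ) (hu : x - X j ≠ 0) :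
    Filter.Tendsto (fun c => mqD c X j x) (nhdsWithin 0 (Set.Ioi 0))
      (nhds ((x - X j) / |x - X j|)) := by
  have hden : Filter.Tendsto (fun c : ℝ => Real.sqrt (c ^ 2 + (x - X j) ^ 2)) (nhds 0)
      (nhds |x - X j|) := by
    have hcont : Continuous fun c : ℝ => Real.sqrt (c ^ 2 + (x - X j) ^ 2) := by fun_prop
    have := hcont.tendsto 0
    simpa [Real.sqrt_sq_eq_abs] using this
  have h := (tendsto_const_nhds (x := x - X j)).div hden (abs_ne_zero.mpr hu)
  exact h.mono_left nhdsWithin_le_nhds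

lemma mqD2_tendsto (X : ℕ → ℝ) (j : ℕ) (x : ℝ) (hu : x - X j ≠ 0) :
    Filter.Tendsto (fun c => mqD2 c X j x) (nhdsWithin 0 (Set.Ioi 0)) (nhds 0) := by
  have hnum : Filter.Tendsto (fun c : ℝ => c ^ 2) (nhds 0) (nhds 0) := by
    have := (continuous_pow 2 (M := ℝ)).tendsto 0
    simpa using this
  have hden : Filter.Tendsto
      (fun c : ℝ => (c ^ 2 + (x - X j) ^ 2) * Real.sqrt (c ^ 2 + (x - X j) ^ 2)) (nhds 0)
      (nhds ((x - X j) ^ 2 * |x - X j|)) := by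
    have hcont : Continuous fun c : ℝ =>
        (c ^ 2 + (x - X j) ^ 2) * Real.sqrt (c ^ 2 + (x - X j) ^ 2) := by fun_prop
    have := hcont.tendsto 0
    simpa [Real.sqrt_sq_eq_abs] using this
  have hne : (x - X j) ^ 2 * |x - X j| ≠ 0 := by
    have := abs_pos.mpr hu
    positivity
  have h := hnum.div hden hne
  rw [zero_div] at h
  exact h.mono_left nhdsWithin_le_nhds

lemma rthD_tendsto (X : ℕ → ℝ) (j : ℕ) (x : ℝ) (hu : x - X j ≠ 0) :
    Filter.Tendsto (fun c => rthD c X j x) (nhdsWithin 0 (Set.Ioi 0))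
      (nhds ((x - X j) / |x - X j|)) := by
  set u := x - X j with hudef
  have hg_top : Filter.Tendsto (fun z : ℝ => Real.tanh z + z * (1 - Real.tanh z ^ 2))
      Filter.atTop (nhds 1) := by
    have := aux_tendsto_tanh_atTop.add aux_K_atTop
    simpa using this
  have hg_bot : Filter.Tendsto (fun z : ℝ => Real.tanh z + z * (1 - Real.tanh z ^ 2))
      Filter.atBot (nhds (-1)) := by
    have := aux_tendsto_tanh_atBot.add aux_K_atBot
    simpa using this
  rcases hu.lt_or_gt with h | h
  · have := hg_bot.comp (aux_div_atBot h)
    have heq : u / |u| = -1 := by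
      rw [abs_of_neg h]; field_simp
    rw [heq]
    exact this.congr fun c => by simp [Function.comp_def, rthD, hudef]
  · have := hg_top.comp (aux_div_atTop h)
    have heq : u / |u| = 1 := by
      rw [abs_of_pos h]; field_simp
    rw [heq]
    exact this.congr fun c => by simp [Function.comp_def, rthD, hudef]

lemma rthD2_tendsto (X : ℕ → ℝ) (j : ℕ) (x : ℝ) (hu : x - X j ≠ 0) :
    Filter.Tendsto (fun c => rthD2 c X j x) (nhdsWithin 0 (Set.Ioi 0)) (nhds 0) := by
  set u := x - X j with hudef
  set G : ℝ → ℝ := fun z =>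
    2 / u * (z * (1 - Real.tanh z ^ 2)) -
      2 / u * (z ^ 2 * (1 - Real.tanh z ^ 2)) * Real.tanh z with hG
  have hG_top : Filter.Tendsto G Filter.atTop (nhds 0) := by
    have := (aux_K_atTop.const_mul (2 / u)).sub
      ((aux_K2_atTop.const_mul (2 / u)).mul aux_tendsto_tanh_atTop)
    simpa using this
  have hG_bot : Filter.Tendsto G Filter.atBot (nhds 0) := by
    have := (aux_K_atBot.const_mul (2 / u)).sub
      ((aux_K2_atBot.const_mul (2 / u)).mul aux_tendsto_tanh_atBot)
    simpa using this
  have hcomp : Filter.Tendsto (fun c => G (u / c)) (nhdsWithin 0 (Set.Ioi 0)) (nhds 0) := by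
    rcases hu.lt_or_gt with h | h
    · exact hG_bot.comp (aux_div_atBot h)
    · exact hG_top.comp (aux_div_atTop h)
  refine hcomp.congr' ?_
  filter_upwards [self_mem_nhdsWithin] with c hc
  have hc0 : c ≠ 0 := ne_of_gt hc
  rw [hG]
  unfold rthD2
  rw [← hudef]
  field_simp

noncomputable def Qgen (phi : ℕ → ℝ → ℝ) (c0 : ℝ) (u v : ℝ → ℝ) (n : ℕ) (X f : ℕ → ℝ)
    (t : ℝ) : ℝ :=
  f 0 * (c0 + (phi 1 t - u t) / (2 * (X 1 - X 0))) +
    f 1 * ((phi 2 t - phi 1 t) / (2 * (X 2 - X 1)) - (phi 1 t - u t) / (2 * (X 1 - X 0))) +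
    (∑ j ∈ Finset.Icc 2 (n - 2), f j * quasiPsi phi X j t) +
    f (n - 1) * ((v t - phi (n - 1) t) / (2 * (X n - X (n - 1))) -
      (phi (n - 1) t - phi (n - 2) t) / (2 * (X (n - 1) - X (n - 2)))) +
    f n * (c0 + (phi (n - 1) t - v t) / (2 * (X n - X (n - 1))))

lemma quasiInterp_eq_Qgen (phi : ℕ → ℝ → ℝ) (n : ℕ) (X f : ℕ → ℝ) :
    quasiInterp phi n X f =
      Qgen phi (1 / 2) (fun t => t - X 0) (fun t => X n - t) n X f := rfl

lemma Qgen_hasDerivAt {phi phi' : ℕ → ℝ → ℝ} {u v u' v' : ℝ → ℝ} (c0 : ℝ) {n : ℕ}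
    {X f : ℕ → ℝ} {t : ℝ}
    (hphi : ∀ j, HasDerivAt (phi j) (phi' j t) t)
    (hu : HasDerivAt u (u' t) t) (hv : HasDerivAt v (v' t) t) :
    HasDerivAt (Qgen phi c0 u v n X f) (Qgen phi' 0 u' v' n X f t) t := by
  unfold Qgen quasiPsi
  simp only [zero_add]
  have h1 := ((((hphi 1).sub hu).div_const (2 * (X 1 - X 0))).const_add c0).const_mul (f 0)
  have h2 := ((((hphi 2).sub (hphi 1)).div_const (2 * (X 2 - X 1))).sub
    (((hphi 1).sub hu).div_const (2 * (X 1 - X 0)))).const_mul (f 1)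
  have hs : HasDerivAt
      (fun t => ∑ j ∈ Finset.Icc 2 (n - 2), f j *
        ((phi (j + 1) t - phi j t) / (2 * (X (j + 1) - X j)) -
          (phi j t - phi (j - 1) t) / (2 * (X j - X (j - 1)))))
      (∑ j ∈ Finset.Icc 2 (n - 2), f j *
        ((phi' (j + 1) t - phi' j t) / (2 * (X (j + 1) - X j)) -
          (phi' j t - phi' (j - 1) t) / (2 * (X j - X (j - 1))))) t :=
    HasDerivAt.fun_sum fun j _ =>
      ((((hphi (j + 1)).sub (hphi j)).div_const _).sub
        (((hphi j).sub (hphi (j - 1))).div_const _)).const_mul (f j)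
  have h3 := (((hv.sub (hphi (n - 1))).div_const (2 * (X n - X (n - 1)))).sub
    (((hphi (n - 1)).sub (hphi (n - 2))).div_const (2 * (X (n - 1) - X (n - 2))))).const_mul
    (f (n - 1))
  have h4 := ((((hphi (n - 1)).sub hv).div_const (2 * (X n - X (n - 1)))).const_add
    c0).const_mul (f n)
  exact (((h1.add h2).add hs).add h3).add h4

lemma deriv_Qgen {phi phi' : ℕ → ℝ → ℝ} {u v u' v' : ℝ → ℝ} (c0 : ℝ) {n : ℕ}
    {X f : ℕ → ℝ}
    (hphi : ∀ j t, HasDerivAt (phi j) (phi' j t) t)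
    (hu : ∀ t, HasDerivAt u (u' t) t) (hv : ∀ t, HasDerivAt v (v' t) t) :
    deriv (Qgen phi c0 u v n X f) = Qgen phi' 0 u' v' n X f :=
  funext fun t => (Qgen_hasDerivAt c0 (fun j => hphi j t) (hu t) (hv t)).deriv

lemma Qgen_tendsto {l : Filter ℝ} {phi : ℝ → ℕ → ℝ → ℝ} {B : ℕ → ℝ} {n : ℕ} {t : ℝ}
    (hn : 4 ≤ n) (h : ∀ j ≤ n, Tendsto (fun c => phi c j t) l (nhds (B j)))
    (c0 : ℝ) (u v : ℝ → ℝ) (X f : ℕ → ℝ) :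
    Tendsto (fun c => Qgen (phi c) c0 u v n X f t) l
      (nhds (Qgen (fun j _ => B j) c0 u v n X f t)) := by
  unfold Qgen quasiPsi
  have h1 := ((((h 1 (by omega)).sub (tendsto_const_nhds (x := u t))).div_const
    (2 * (X 1 - X 0))).const_add c0).const_mul (f 0)
  have h2 := ((((h 2 (by omega)).sub (h 1 (by omega))).div_const (2 * (X 2 - X 1))).sub
    (((h 1 (by omega)).sub (tendsto_const_nhds (x := u t))).div_const (2 * (X 1 - X 0)))).const_mul (f 1)
  have hs : Tendsto
      (fun c => ∑ j ∈ Finset.Icc 2 (n - 2), f j *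
        ((phi c (j + 1) t - phi c j t) / (2 * (X (j + 1) - X j)) -
          (phi c j t - phi c (j - 1) t) / (2 * (X j - X (j - 1)))))
      l (nhds (∑ j ∈ Finset.Icc 2 (n - 2), f j *
        ((B (j + 1) - B j) / (2 * (X (j + 1) - X j)) -
          (B j - B (j - 1)) / (2 * (X j - X (j - 1)))))) := by
    refine tendsto_finset_sum _ fun j hj => ?_
    simp only [Finset.mem_Icc] at hj
    exact ((((h (j + 1) (by omega)).sub (h j (by omega))).div_const _).sub
      (((h j (by omega)).sub (h (j - 1) (by omega))).div_const _)).const_mul (f j)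
  have h3 := ((((tendsto_const_nhds (x := v t)).sub (h (n - 1) (by omega))).div_const
    (2 * (X n - X (n - 1)))).sub (((h (n - 1) (by omega)).sub
    (h (n - 2) (by omega))).div_const (2 * (X (n - 1) - X (n - 2))))).const_mul (f (n - 1))
  have h4 := ((((h (n - 1) (by omega)).sub (tendsto_const_nhds (x := v t))).div_const
    (2 * (X n - X (n - 1)))).const_add c0).const_mul (f n)
  exact (((h1.add h2).add hs).add h3).add h4

lemma curvature_tendsto (n : ℕ) (hn : 4 ≤ n) (X f : ℕ → ℝ) (x : ℝ)
    (phi phiD phiD2 : ℝ → ℕ → ℝ → ℝ) (S : ℕ → ℝ)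
    (hD : ∀ c, 0 < c → ∀ j t, HasDerivAt (phi c j) (phiD c j t) t)
    (hD2 : ∀ c, 0 < c → ∀ j t, HasDerivAt (phiD c j) (phiD2 c j t) t)
    (h1 : ∀ j ≤ n, Filter.Tendsto (fun c => phiD c j x) (nhdsWithin 0 (Set.Ioi 0))
      (nhds (S j)))
    (h2 : ∀ j ≤ n, Filter.Tendsto (fun c => phiD2 c j x) (nhdsWithin 0 (Set.Ioi 0))
      (nhds 0)) :
    Filter.Tendsto (fun c => curvature (quasiInterp (phi c) n X f) x)
      (nhdsWithin 0 (Set.Ioi 0)) (nhds 0) := by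
  have hform : ∀ c, 0 < c →
      curvature (quasiInterp (phi c) n X f) x =
        |Qgen (phiD2 c) 0 (fun _ => 0) (fun _ => 0) n X f x| /
          (1 + (Qgen (phiD c) 0 (fun _ => 1) (fun _ => -1) n X f x) ^ 2) ^ ((3 : ℝ) / 2) := by
    intro c hc
    have hu : ∀ t : ℝ, HasDerivAt (fun t : ℝ => t - X 0) ((fun _ : ℝ => (1 : ℝ)) t) t :=
      fun t => by simpa using (hasDerivAt_id t).sub_const (X 0)
    have hv : ∀ t : ℝ, HasDerivAt (fun t : ℝ => X n - t) ((fun _ : ℝ => (-1 : ℝ)) t) t :=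
      fun t => by simpa using (hasDerivAt_id t).const_sub (X n)
    have e1 : deriv (quasiInterp (phi c) n X f) =
        Qgen (phiD c) 0 (fun _ => 1) (fun _ => -1) n X f := by
      rw [quasiInterp_eq_Qgen]
      exact deriv_Qgen _ (hD c hc) hu hv
    have e2 : deriv (deriv (quasiInterp (phi c) n X f)) x =
        Qgen (phiD2 c) 0 (fun _ => 0) (fun _ => 0) n X f x := by
      rw [e1]
      exact (Qgen_hasDerivAt 0 (fun j => hD2 c hc j x) (hasDerivAt_const x (1 : ℝ))
        (hasDerivAt_const x (-1 : ℝ))).deriv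
    rw [curvature, e2, e1]
  set L := Qgen (fun j _ => S j) 0 (fun _ => (1 : ℝ)) (fun _ => (-1 : ℝ)) n X f x with hL
  have hnum : Filter.Tendsto
      (fun c => |Qgen (phiD2 c) 0 (fun _ => 0) (fun _ => 0) n X f x|)
      (nhdsWithin 0 (Set.Ioi 0)) (nhds 0) := by
    have h := Qgen_tendsto hn h2 0 (fun _ => 0) (fun _ => 0) X f
    have hz : Qgen (fun j (_ : ℝ) => (0 : ℝ)) 0 (fun _ => (0 : ℝ)) (fun _ => (0 : ℝ))
        n X f x = 0 := by
      simp [Qgen, quasiPsi]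
    rw [hz] at h
    simpa using h.abs
  have hden : Filter.Tendsto
      (fun c => (1 + (Qgen (phiD c) 0 (fun _ => 1) (fun _ => -1) n X f x) ^ 2) ^ ((3 : ℝ) / 2))
      (nhdsWithin 0 (Set.Ioi 0)) (nhds ((1 + L ^ 2) ^ ((3 : ℝ) / 2))) := by
    have h := Qgen_tendsto hn h1 0 (fun _ => 1) (fun _ => -1) X f
    exact ((h.pow 2).const_add 1).rpow_const (Or.inr (by norm_num))
  have hden_ne : ((1 + L ^ 2) ^ ((3 : ℝ) / 2)) ≠ 0 := by positivity
  have hmain := hnum.div hden hden_ne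
  rw [zero_div] at hmain
  refine hmain.congr' ?_
  filter_upwards [self_mem_nhdsWithin] with c hc
  exact (hform c hc).symm


end Aux

/-- For a point `x ∈ (x₀, x_n)` different from all nodes, the difference between the
curvatures at `x` of the MQ and RTH quasi-interpolants tends to `0` as `c → 0⁺`. -/
theorem mq_rth_curvature_difference_tendsto_zero
    (n : ℕ) (hn : 4 ≤ n) (X : ℕ → ℝ) (hX : StrictMonoOn X (Set.Icc 0 n))
    (f : ℕ → ℝ) (x : ℝ) (hx : x ∈ Set.Ioo (X 0) (X n))
    (hxj : ∀ j ≤ n, x ≠ X j) :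
    Filter.Tendsto
      (fun c : ℝ =>
        |curvature (quasiInterp (mqBasis c X) n X f) x -
          curvature (quasiInterp (rthBasis c X) n X f) x|)
      (nhdsWithin 0 (Set.Ioi 0)) (nhds 0) := by
  have hu : ∀ j ≤ n, x - X j ≠ 0 := fun j hj => sub_ne_zero.mpr (hxj j hj)
  have hMQ : Filter.Tendsto (fun c => curvature (quasiInterp (mqBasis c X) n X f) x)
      (nhdsWithin 0 (Set.Ioi 0)) (nhds 0) :=
    curvature_tendsto n hn X f x (fun c => mqBasis c X) (fun c => mqD c X)
      (fun c => mqD2 c X) (fun j => (x - X j) / |x - X j|)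
      (fun c hc j t => mq_hasDerivAt (ne_of_gt hc) X j t)
      (fun c hc j t => mqD_hasDerivAt (ne_of_gt hc) X j t)
      (fun j hj => mqD_tendsto X j x (hu j hj))
      (fun j hj => mqD2_tendsto X j x (hu j hj))
  have hRTH : Filter.Tendsto (fun c => curvature (quasiInterp (rthBasis c X) n X f) x)
      (nhdsWithin 0 (Set.Ioi 0)) (nhds 0) :=
    curvature_tendsto n hn X f x (fun c => rthBasis c X) (fun c => rthD c X)
      (fun c => rthD2 c X) (fun j => (x - X j) / |x - X j|)
      (fun c hc j t => rth_hasDerivAt (ne_of_gt hc) X j t)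
      (fun c hc j t => rthD_hasDerivAt (ne_of_gt hc) X j t)
      (fun j hj => rthD_tendsto X j x (hu j hj))
      (fun j hj => rthD2_tendsto X j x (hu j hj))
  have h := (hMQ.sub hRTH).abs
  simpa using h
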